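/- arXiv:2111.14492 — 8 statements merged into one kernel-verified Lean document; each statement's English description precedes it below -/
import Mathlib

section
/- For every natural number n ≥ 1, the n×n Hankel determinant det( C(i+j, ⌊(i+j)/2⌋) )_{i,j=0}^{n-1} of the middle binomial coefficients equals 1. -/
/-!
The Hankel matrix factors as `B * Bᵀ`, where `B i k` counts the walks of length `i` from `0`
to `k` on `ℕ` with steps `±1` and a loop at `0`. Since the one-step transfer operator is
symmetric, `(B * Bᵀ) i j` counts the closed walks at `0` of length `i + j`, which number
`C(i + j, ⌊(i + j)/2⌋)`. The matrix `B` is lower unitriangular, so the determinant is `1`.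
-/

open Finset Matrix

theorem Nat.choose_div_two_eq_choose_succ_div_two (m : ℕ) :
    m.choose (m / 2) = m.choose ((m + 1) / 2) :=
  Nat.choose_symm_of_eq_add (by omega)

/-- The number of walks of length `i` from `0` to `k` on `ℕ` with steps `±1`, a down-step at `0`
staying at `0` (this is `walkCount_succ`). -/
def walkCount (i k : ℕ) : ℕ := i.choose ((i + k + 1) / 2)

-- At `k = 0` the truncated subtraction gives `f 0`: this is the loop at `0`.
def walkStep {R : Type*} [Add R] (f : ℕ → R) (k : ℕ) : R := f (k - 1) + f (k + 1)

theorem sum_walkStep_mul_comm {R : Type*} [NonUnitalNonAssocSemiring R] (f g : ℕ → R) (M : ℕ)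
    (hf : ∀ k, M ≤ k → f k = 0) :
    ∑ k ∈ range (M + 1), walkStep f k * g k = ∑ k ∈ range (M + 1), f k * walkStep g k := by
  simp only [walkStep, add_mul, mul_add, sum_add_distrib]
  rw [sum_range_succ' (fun k => f (k - 1) * g k), sum_range_succ (fun k => f (k + 1) * g k),
    sum_range_succ' (fun k => f k * g (k - 1)), sum_range_succ (fun k => f k * g (k + 1))]
  simp only [add_tsub_cancel_right, hf M le_rfl, hf (M + 1) (by omega), zero_mul, add_zero]
  abel

theorem walkCount_succ (i : ℕ) : walkCount (i + 1) = walkStep (walkCount i) := by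
  funext k
  rcases k with _ | k
  · have hsucc : (i + 1 + 0 + 1) / 2 = i / 2 + 1 := by omega
    rw [walkStep, walkCount, hsucc, Nat.choose_succ_succ',
      Nat.choose_div_two_eq_choose_succ_div_two]
    simp only [walkCount]
    congr 2; omega
  · have hsucc : (i + 1 + (k + 1) + 1) / 2 = (i + k + 1) / 2 + 1 := by omega
    rw [walkStep, walkCount, hsucc, Nat.choose_succ_succ']
    simp only [walkCount]
    congr 2; omega

theorem walkCount_eq_zero_of_lt {i k : ℕ} (h : i < k) : walkCount i k = 0 :=
  Nat.choose_eq_zero_of_lt (by omega)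

theorem walkCount_self (i : ℕ) : walkCount i i = 1 := by
  rw [walkCount, show (i + i + 1) / 2 = i by omega, Nat.choose_self]

theorem walkCount_zero_right (m : ℕ) : walkCount m 0 = m.choose (m / 2) := by
  rw [walkCount, Nat.choose_div_two_eq_choose_succ_div_two]

theorem sum_walkCount_mul_walkCount (i j N : ℕ) (hi : i < N) :
    ∑ k ∈ range N, walkCount i k * walkCount j k = walkCount (i + j) 0 := by
  induction i generalizing j with
  | zero =>
    rw [sum_eq_single_of_mem 0 (mem_range.mpr hi) fun k _ hk =>
      by rw [walkCount_eq_zero_of_lt (Nat.pos_of_ne_zero hk), zero_mul]]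
    simp [walkCount]
  | succ i ih =>
    obtain ⟨M, rfl⟩ : ∃ M, N = M + 1 := ⟨N - 1, by omega⟩
    calc ∑ k ∈ range (M + 1), walkCount (i + 1) k * walkCount j k
        = ∑ k ∈ range (M + 1), walkCount i k * walkCount (j + 1) k := by
          rw [walkCount_succ, walkCount_succ,
            sum_walkStep_mul_comm _ _ M fun k hk => walkCount_eq_zero_of_lt (by omega)]
      _ = walkCount (i + 1 + j) 0 := by rw [ih (j + 1) (by omega), Nat.add_right_comm, add_assoc]

theorem det_walkCount_matrix (n : ℕ) :
    (of fun i k : Fin n => (walkCount i k : ℤ)).det = 1 := by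
  rw [det_of_isLowerTriangular _ fun i k hik => by
    rw [of_apply, walkCount_eq_zero_of_lt (Fin.lt_def.mp (OrderDual.toDual_lt_toDual.mp hik)),
      Nat.cast_zero]]
  simp [walkCount_self]

theorem middleBinomial_hankel_eq_mul_transpose (n : ℕ) :
    (of fun i j : Fin n => (((i.val + j.val).choose ((i.val + j.val) / 2) : ℕ) : ℤ)) =
      of (fun i k : Fin n => (walkCount i k : ℤ)) *
        (of fun i k : Fin n => (walkCount i k : ℤ))ᵀ := by
  ext i j
  rw [of_apply, ← walkCount_zero_right, ← sum_walkCount_mul_walkCount i j n i.isLt]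
  push_cast
  exact (Fin.sum_univ_eq_sum_range (fun k => (walkCount i k : ℤ) * walkCount j k) n).symm

theorem stmt4_general (n : ℕ) :
    Matrix.det (Matrix.of fun i j : Fin n =>
      (((i.val + j.val).choose ((i.val + j.val) / 2) : ℕ) : ℤ)) = 1 := by
  rw [middleBinomial_hankel_eq_mul_transpose, det_mul, det_transpose,
    det_walkCount_matrix, mul_one]

/-- The `n×n` Hankel determinant of the middle binomial coefficients
`b(m) = C(m, ⌊m/2⌋)` equals `1`. -/
theorem stmt4 (n : ℕ) (hn : 1 ≤ n) :
    Matrix.det (Matrix.of fun i j : Fin n =>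
      (((i.val + j.val).choose ((i.val + j.val) / 2) : ℕ) : ℤ)) = 1 :=
  stmt4_general n
end

section
/- For every natural number n ≥ 1, the n×n Hankel determinant det( C(1+i+j, ⌊(1+i+j)/2⌋) )_{i,j=0}^{n-1} of the shifted middle binomial coefficients equals (-1)^{C(n,2)}. -/
/-!
If the rows of a lower unitriangular array `L` are `e₀ Jⁿ` for a tridiagonal matrix `J` with
`1` on the superdiagonal, `aₖ` on the diagonal and `cₖ` on the subdiagonal, then
`∑ₖ (c₀ ⋯ cₖ₋₁) L i k L j k = L (i + j) 0`: moving one step of `J` from `i` to `j` changes the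
sum by a telescoping series. Hence the Hankel matrix of `L n 0` is `L D Lᵀ` with `D` diagonal,
and its determinant is `∏ₖ (c₀ ⋯ cₖ₋₁)`. For `L n 0 = b(n + 1)` the array is explicit in binomial
coefficients, with `aₖ = 2 (-1)ᵏ` and `cₖ = -1`, which gives `∏_{k<n} (-1)ᵏ = (-1)^C(n,2)`.
-/

open Finset

section JacobiTableau

variable {R : Type*} [CommRing R] {a c : ℕ → R} {L : ℕ → ℕ → R}

/-- `L n k = (e₀ Jⁿ) k` for the tridiagonal matrix `J` with `J k (k + 1) = 1`, `J k k = a k` and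
`J (k + 1) k = c k`. -/
structure IsJacobiTableau (a c : ℕ → R) (L : ℕ → ℕ → R) : Prop where
  zero : ∀ k, L 0 k = if k = 0 then 1 else 0
  succ_zero : ∀ n, L (n + 1) 0 = a 0 * L n 0 + c 0 * L n 1
  succ_succ : ∀ n k, L (n + 1) (k + 1) = L n k + a (k + 1) * L n (k + 1) + c (k + 1) * L n (k + 2)

def jacobiWeight (c : ℕ → R) (k : ℕ) : R := ∏ m ∈ range k, c m

namespace IsJacobiTableau

theorem eq_zero_of_lt (h : IsJacobiTableau a c L) {n k : ℕ} (hnk : n < k) : L n k = 0 := by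
  induction n generalizing k with
  | zero => simp [h.zero, Nat.pos_iff_ne_zero.mp hnk]
  | succ n ih =>
    obtain ⟨k, rfl⟩ := Nat.exists_eq_add_one_of_ne_zero (by omega : k ≠ 0)
    rw [h.succ_succ, ih (by omega), ih (by omega), ih (by omega)]
    ring

theorem apply_self (h : IsJacobiTableau a c L) (n : ℕ) : L n n = 1 := by
  induction n with
  | zero => simp [h.zero]
  | succ n ih => rw [h.succ_succ, ih, h.eq_zero_of_lt (by omega), h.eq_zero_of_lt (by omega)]; ring

theorem sum_weight_succ_left (h : IsJacobiTableau a c L) {i j N : ℕ} (hN : i + 1 < N) :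
    ∑ k ∈ range N, jacobiWeight c k * L (i + 1) k * L j k =
      ∑ k ∈ range N, jacobiWeight c k * L i k * L (j + 1) k := by
  set F : ℕ → R := fun k => jacobiWeight c k * (L i (k - 1) * L j k - L i k * L j (k - 1))
  have hterm : ∀ k, jacobiWeight c k * L (i + 1) k * L j k - jacobiWeight c k * L i k * L (j + 1) k
      = F k - F (k + 1) := by
    intro k
    cases k with
    | zero =>
      simp only [F, jacobiWeight, prod_range_succ, prod_range_zero, h.succ_zero, Nat.zero_sub,
        Nat.sub_self]
      ring
    | succ k =>
      simp only [F, jacobiWeight, prod_range_succ _ (k + 1), h.succ_succ, Nat.add_sub_cancel]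
      ring
  rw [← sub_eq_zero, ← sum_sub_distrib, sum_congr rfl fun k _ => hterm k, sum_range_sub']
  simp [F, h.eq_zero_of_lt (show i < N - 1 by omega), h.eq_zero_of_lt (show i < N by omega)]

theorem sum_weight_eq (h : IsJacobiTableau a c L) {i N : ℕ} (hN : i < N) (j : ℕ) :
    ∑ k ∈ range N, jacobiWeight c k * L i k * L j k = L (i + j) 0 := by
  induction i generalizing j with
  | zero =>
    rw [sum_eq_single_of_mem 0 (mem_range.mpr hN) fun k _ hk => by simp [h.zero, hk]]
    simp [h.zero, jacobiWeight]
  | succ i ih =>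
    rw [h.sum_weight_succ_left hN, ih (by omega), add_right_comm, add_assoc]

theorem det_hankel (h : IsJacobiTableau a c L) (n : ℕ) :
    (Matrix.of fun i j : Fin n => L (i + j) 0).det = ∏ k ∈ range n, jacobiWeight c k := by
  let T : Matrix (Fin n) (Fin n) R := Matrix.of fun i k => L i k
  have hfactor : (Matrix.of fun i j : Fin n => L (i + j) 0) =
      T * Matrix.diagonal (fun k : Fin n => jacobiWeight c k) * T.transpose := by
    ext i j
    rw [Matrix.of_apply, Matrix.mul_apply]
    simp only [Matrix.mul_diagonal, Matrix.transpose_apply, Matrix.of_apply, T]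
    rw [← h.sum_weight_eq i.isLt j,
      ← Fin.sum_univ_eq_sum_range (fun k => jacobiWeight c k * L i k * L j k)]
    exact sum_congr rfl fun k _ => by ring
  have hT : T.det = 1 := by
    rw [Matrix.det_of_isLowerTriangular T fun i k hik => h.eq_zero_of_lt hik]
    simp [T, h.apply_self]
  rw [hfactor, Matrix.det_mul, Matrix.det_mul, Matrix.det_transpose, hT, Matrix.det_diagonal,
    Fin.prod_univ_eq_prod_range (jacobiWeight c) n]
  ring

end IsJacobiTableau

end JacobiTableau

theorem Nat.choose_add_two_add_two (n k : ℕ) :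
    (n + 2).choose (k + 2) = n.choose k + 2 * n.choose (k + 1) + n.choose (k + 2) := by
  rw [Nat.choose_succ_succ, Nat.choose_succ_succ, Nat.choose_succ_succ]
  ring

/-- Rows `2m` and `2m + 1` are built from `B r = C(2m+1, m+r+1) = C(2m+1, m-r)`; the first form
vanishes past the diagonal without integer indices. -/
def middleBinomialTableau (n k : ℕ) : ℤ :=
  let B (r : ℕ) : ℤ := (2 * (n / 2) + 1).choose (n / 2 + r + 1)
  if Even n then (if Even k then B (k / 2) else 0)
  else if Even k then 2 * B (k / 2) else B (k / 2) - B (k / 2 + 1)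

namespace middleBinomialTableau

theorem even_even (m j : ℕ) :
    middleBinomialTableau (2 * m) (2 * j) = (2 * m + 1).choose (m + j + 1) := by
  simp [middleBinomialTableau]

theorem even_odd (m j : ℕ) : middleBinomialTableau (2 * m) (2 * j + 1) = 0 := by
  simp [middleBinomialTableau]

theorem odd_even (m j : ℕ) :
    middleBinomialTableau (2 * m + 1) (2 * j) = 2 * (2 * m + 1).choose (m + j + 1) := by
  simp [middleBinomialTableau, show (2 * m + 1) / 2 = m by omega]

theorem odd_odd (m j : ℕ) : middleBinomialTableau (2 * m + 1) (2 * j + 1) =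
    (2 * m + 1).choose (m + j + 1) - (2 * m + 1).choose (m + j + 2) := by
  simp [middleBinomialTableau, show (2 * m + 1) / 2 = m by omega,
    show (2 * j + 1) / 2 = j by omega, add_assoc]

theorem isJacobiTableau :
    IsJacobiTableau (fun k => 2 * (-1) ^ k) (fun _ => -1) middleBinomialTableau where
  zero k := by
    obtain ⟨j, rfl | rfl⟩ := Nat.even_or_odd' k
    · rw [even_even 0 j]
      cases j <;> simp [Nat.choose_eq_zero_of_lt]
    · simpa using even_odd 0 j
  succ_zero n := by
    obtain ⟨m, rfl | rfl⟩ := Nat.even_or_odd' n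
    · simp only [odd_even m 0, even_even m 0, even_odd m 0]
      ring
    · rw [show 2 * m + 1 + 1 = 2 * (m + 1) by ring]
      simp only [even_even (m + 1) 0, odd_even m 0, odd_odd m 0]
      rw [show 2 * (m + 1) + 1 = 2 * m + 1 + 2 by ring, Nat.choose_add_two_add_two]
      simp only [add_zero, Nat.choose_symm_half]
      push_cast
      ring_nf
  succ_succ n k := by
    obtain ⟨m, rfl | rfl⟩ := Nat.even_or_odd' n <;> obtain ⟨j, rfl | rfl⟩ := Nat.even_or_odd' k
    · rw [show 2 * j + 2 = 2 * (j + 1) by ring]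
      simp only [even_even, even_odd, odd_odd, pow_succ, pow_mul]
      ring_nf
    · rw [show 2 * j + 1 + 1 = 2 * (j + 1) by ring, show 2 * j + 1 + 2 = 2 * (j + 1) + 1 by ring]
      simp only [even_even, even_odd, odd_even, pow_succ, pow_mul]
      ring_nf
    · rw [show 2 * m + 1 + 1 = 2 * (m + 1) by ring, show 2 * j + 2 = 2 * (j + 1) by ring]
      simp only [even_odd, odd_even, odd_odd, pow_succ, pow_mul]
      ring_nf
    · rw [show 2 * m + 1 + 1 = 2 * (m + 1) by ring, show 2 * j + 1 + 1 = 2 * (j + 1) by ring,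
        show 2 * j + 1 + 2 = 2 * (j + 1) + 1 by ring]
      simp only [even_even, odd_even, odd_odd, pow_succ, pow_mul]
      rw [show 2 * (m + 1) + 1 = 2 * m + 1 + 2 by ring,
        show m + 1 + (j + 1) + 1 = m + j + 1 + 2 by ring, Nat.choose_add_two_add_two]
      push_cast
      ring_nf

theorem apply_zero_right (n : ℕ) :
    middleBinomialTableau n 0 = (n + 1).choose ((n + 1) / 2) := by
  obtain ⟨m, rfl | rfl⟩ := Nat.even_or_odd' n
  · rw [even_even m 0, show (2 * m + 1) / 2 = m by omega, add_zero, Nat.choose_symm_half]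
  · rw [odd_even m 0, show (2 * m + 1 + 1) / 2 = m + 1 by omega, add_zero,
      Nat.choose_succ_succ (2 * m + 1) m, Nat.choose_symm_half]
    push_cast
    ring

end middleBinomialTableau

theorem stmt5_general (n : ℕ) :
    Matrix.det (Matrix.of fun i j : Fin n =>
      (((1 + i.val + j.val).choose ((1 + i.val + j.val) / 2) : ℕ) : ℤ))
      = (-1) ^ n.choose 2 := by
  have hentry : ∀ i j : Fin n, (((1 + i.val + j.val).choose ((1 + i.val + j.val) / 2) : ℕ) : ℤ) =
      middleBinomialTableau (i + j) 0 := fun i j => by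
    rw [middleBinomialTableau.apply_zero_right, add_comm 1, add_right_comm]
  simp_rw [hentry]
  rw [middleBinomialTableau.isJacobiTableau.det_hankel, Nat.choose_two_right, ← sum_range_id]
  simp only [jacobiWeight, prod_const, card_range]
  exact prod_pow_eq_pow_sum _ _ _

/-- The `n×n` Hankel determinant of the shifted middle binomial coefficients
`b(1+i+j) = C(1+i+j, ⌊(1+i+j)/2⌋)` equals `(-1)^(C(n,2))`. -/
theorem stmt5 (n : ℕ) (hn : 1 ≤ n) :
    Matrix.det (Matrix.of fun i j : Fin n =>
      (((1 + i.val + j.val).choose ((1 + i.val + j.val) / 2) : ℕ) : ℤ))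
      = (-1) ^ n.choose 2 :=
  stmt5_general n
end

section
/- For all natural numbers k and n ≥ 1, the n×n Hankel determinant D_k(n) = det( C(k+i+j, ⌊(k+i+j)/2⌋) )_{i,j=0}^{n-1} satisfies (-1)^{k·C(n,2)}·D_k(n) = ∏_{j=1}^{k} ((j+n)/j)^{min(j, k-j)} = ∏_{i=1}^{⌊k/2⌋} ∏_{j=1}^{⌈k/2⌉} (i+j+n-1)/(i+j-1) (an equality of rational numbers, both sides in fact being positive integers). -/
/-!
Desnanot–Jacobi condensation, applied to the Hankel matrices of any sequence, gives
`D_k(n+2) D_{k+2}(n) = D_k(n+1) D_{k+2}(n+1) - D_{k+1}(n+1)^2`, which determines every `D_k(n)`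
from `D_k(0) = 1` and `D_k(1) = b(k)` as long as the determinants divided by stay nonzero.
MacMahon's box product `M(a,b,c) = ∏ (i+j+c-1)/(i+j-1)` at `a = ⌊k/2⌋`, `b = ⌈k/2⌉`, `c = n`
has the same initial values (`M(a,b,1) = C(a+b,a)`) and, up to the sign `(-1)^(k C(n,2))`,
satisfies the same recurrence: two box products differing by one in a single dimension have a
quotient of rising factorials as ratio, so after division by one of its terms the recurrence
becomes an identity between linear factors. Growing the box one row or column at a time turns
`M` into the product `∏ ((j+n)/j)^min(j,k-j)`.
-/

open Finset Matrix

namespace Matrix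

lemma det_submatrix_mul_det_submatrix_swap {m n R : Type*} [Fintype m] [DecidableEq m]
    [Fintype n] [DecidableEq n] [CommRing R] (e₁ e₂ : m ≃ n) (A B : Matrix n n R) :
    (A.submatrix e₁ e₂).det * (B.submatrix e₂ e₁).det = A.det * B.det := by
  set σ : Equiv.Perm n := e₁.symm.trans e₂
  have hA : A.submatrix e₁ e₂ = (A.submatrix id σ).submatrix e₁ e₁ := by ext; simp [σ]
  have hB : B.submatrix e₂ e₁ = (B.submatrix id σ.symm).submatrix e₂ e₂ := by
    ext; simp [σ]
  have hsign : ((Equiv.Perm.sign σ : ℤ) : R) * (Equiv.Perm.sign σ : ℤ) = 1 := by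
    rw [← Int.cast_mul, ← Units.val_mul, Int.units_mul_self, Units.val_one, Int.cast_one]
  rw [hA, hB, det_submatrix_equiv_self, det_submatrix_equiv_self, det_permute', det_permute',
    Equiv.Perm.sign_symm]
  linear_combination A.det * B.det * hsign

variable {K : Type*} [Field K]

def borderIndex {ι : Type*} (y : Fin 2) : ι ⊕ Fin 1 → ι ⊕ Fin 2 := Sum.map id fun _ => y

theorem det_mul_det_toBlocks₁₁ {ι : Type*} [Fintype ι] [DecidableEq ι]
    (N : Matrix (ι ⊕ Fin 2) (ι ⊕ Fin 2) K) (h : N.toBlocks₁₁.det ≠ 0) :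
    N.det * N.toBlocks₁₁.det
      = (N.submatrix (borderIndex 0) (borderIndex 0)).det
          * (N.submatrix (borderIndex 1) (borderIndex 1)).det
        - (N.submatrix (borderIndex 0) (borderIndex 1)).det
          * (N.submatrix (borderIndex 1) (borderIndex 0)).det := by
  set A := N.toBlocks₁₁
  let := A.invertibleOfIsUnitDet (isUnit_iff_ne_zero.2 h)
  set S := N.toBlocks₂₂ - N.toBlocks₂₁ * ⅟A * N.toBlocks₁₂
  have hborder (y z : Fin 2) :
      (N.submatrix (borderIndex y) (borderIndex z)).det = A.det * S y z := by
    have : N.submatrix (borderIndex y) (borderIndex z)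
        = fromBlocks A (N.toBlocks₁₂.submatrix id fun _ => z)
            (N.toBlocks₂₁.submatrix (fun _ => y) id)
            (N.toBlocks₂₂.submatrix (fun _ => y) fun _ => z) := by
      ext (i | i) (j | j) <;> rfl
    rw [this, det_fromBlocks₁₁, det_fin_one]
    simp [S, Matrix.mul_apply]
  rw [hborder, hborder, hborder, hborder]
  conv_lhs => rw [← fromBlocks_toBlocks N, det_fromBlocks₁₁, det_fin_two]
  ring

theorem desnanot_jacobi {n : ℕ} (M : Matrix (Fin (n + 2)) (Fin (n + 2)) K)
    (h : (M.submatrix (Fin.succ ∘ Fin.castSucc) (Fin.succ ∘ Fin.castSucc)).det ≠ 0) :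
    M.det * (M.submatrix (Fin.succ ∘ Fin.castSucc) (Fin.succ ∘ Fin.castSucc)).det
      = (M.submatrix Fin.castSucc Fin.castSucc).det * (M.submatrix Fin.succ Fin.succ).det
        - (M.submatrix Fin.castSucc Fin.succ).det * (M.submatrix Fin.succ Fin.castSucc).det := by
  let f : Fin n ⊕ Fin 2 → Fin (n + 2) := Sum.elim (Fin.succ ∘ Fin.castSucc) ![0, Fin.last _]
  have hf : f.Injective := by
    refine (Fin.succ_injective _ |>.comp (Fin.castSucc_injective _)).sumElim ?_ ?_
    · intro y z; fin_cases y <;> fin_cases z <;> simp [Fin.ext_iff]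
    · intro i y; fin_cases y <;> simp [Fin.ext_iff]; omega
  let e : Fin n ⊕ Fin 2 ≃ Fin (n + 2) :=
    Equiv.ofBijective f ((Fintype.bijective_iff_injective_and_card f).2 ⟨hf, by simp⟩)
  -- `ρ₀` and `ρ₁` identify the two corner minors with bordered matrices; since they differ, each
  -- mixed minor is reindexed by two different equivalences, whose signs cancel in the product.
  let g : Fin n ⊕ Fin 1 → Fin (n + 1) := Sum.elim Fin.succ fun _ => 0
  have hg : g.Injective := by
    refine (Fin.succ_injective _).sumElim (Function.injective_of_subsingleton _) ?_
    intro i _; exact Fin.succ_ne_zero i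
  let ρ₀ : Fin n ⊕ Fin 1 ≃ Fin (n + 1) :=
    Equiv.ofBijective g ((Fintype.bijective_iff_injective_and_card g).2 ⟨hg, by simp⟩)
  let ρ₁ : Fin n ⊕ Fin 1 ≃ Fin (n + 1) := finSumFinEquiv
  have h₀ : Fin.castSucc ∘ ρ₀ = e ∘ borderIndex 0 := by
    ext (i | i) <;> simp [ρ₀, e, f, g, borderIndex]
  have h₁ : Fin.succ ∘ ρ₁ = e ∘ borderIndex 1 := by
    ext (i | i) <;> simp [ρ₁, e, f, borderIndex]
  have key := det_mul_det_toBlocks₁₁ (M.submatrix e e) h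
  have minor {τ τ' : Fin (n + 1) → Fin (n + 2)} {ρ ρ' : Fin n ⊕ Fin 1 → Fin (n + 1)}
      {y z : Fin 2}
      (hy : τ ∘ ρ = e ∘ borderIndex y) (hz : τ' ∘ ρ' = e ∘ borderIndex z) :
      (M.submatrix e e).submatrix (borderIndex y) (borderIndex z)
        = (M.submatrix τ τ').submatrix ρ ρ' := by
    simp only [submatrix_submatrix, hy, hz]
  rw [minor h₀ h₀, minor h₁ h₁, minor h₀ h₁, minor h₁ h₀, det_submatrix_equiv_self,
    det_submatrix_equiv_self, det_submatrix_mul_det_submatrix_swap, det_submatrix_equiv_self] at key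
  exact key

end Matrix

def hankel {R : Type*} (f : ℕ → R) (k n : ℕ) : Matrix (Fin n) (Fin n) R :=
  of fun i j => f (k + i + j)

section Hankel

variable {R : Type*} (f : ℕ → R) (k n : ℕ)

lemma hankel_submatrix_castSucc_castSucc :
    (hankel f k (n + 1)).submatrix Fin.castSucc Fin.castSucc = hankel f k n := rfl

lemma hankel_submatrix_succ_succ :
    (hankel f k (n + 1)).submatrix Fin.succ Fin.succ = hankel f (k + 2) n := by
  ext i j; simp only [hankel, submatrix_apply, of_apply, Fin.val_succ]; congr 1; ring

lemma hankel_submatrix_castSucc_succ :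
    (hankel f k (n + 1)).submatrix Fin.castSucc Fin.succ = hankel f (k + 1) n := by
  ext i j; simp only [hankel, submatrix_apply, of_apply, Fin.val_succ, Fin.val_castSucc]
  congr 1; ring

lemma hankel_submatrix_succ_castSucc :
    (hankel f k (n + 1)).submatrix Fin.succ Fin.castSucc = hankel f (k + 1) n := by
  ext i j; simp only [hankel, submatrix_apply, of_apply, Fin.val_succ, Fin.val_castSucc]
  congr 1; ring

end Hankel

theorem det_hankel_condensation {K : Type*} [Field K] (f : ℕ → K) (k n : ℕ)
    (h : (hankel f (k + 2) n).det ≠ 0) :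
    (hankel f k (n + 2)).det * (hankel f (k + 2) n).det
      = (hankel f k (n + 1)).det * (hankel f (k + 2) (n + 1)).det
        - (hankel f (k + 1) (n + 1)).det ^ 2 := by
  have hinterior :
      (hankel f k (n + 2)).submatrix (Fin.succ ∘ Fin.castSucc) (Fin.succ ∘ Fin.castSucc)
        = hankel f (k + 2) n := by
    rw [← submatrix_submatrix, hankel_submatrix_succ_succ, hankel_submatrix_castSucc_castSucc]
  rw [← hinterior] at h ⊢
  rw [desnanot_jacobi _ h, hankel_submatrix_castSucc_castSucc, hankel_submatrix_succ_succ,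
    hankel_submatrix_castSucc_succ, hankel_submatrix_succ_castSucc, sq]

namespace Nat

variable {R : Type*}

lemma cast_succ_ascFactorial_eq_prod [CommSemiring R] (x s : ℕ) :
    ((x + 1).ascFactorial s : R) = ∏ j ∈ Icc 1 s, ((x : R) + j) := by
  induction s with
  | zero => simp
  | succ s ih =>
    rw [ascFactorial_succ, prod_Icc_succ_top (by omega), ← ih]
    push_cast; ring

lemma cast_ascFactorial_succ [Semiring R] (x s : ℕ) :
    (x.ascFactorial (s + 1) : R) = (x + s) * x.ascFactorial s := by
  rw [ascFactorial_succ]; push_cast; rfl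

lemma cast_mul_succ_ascFactorial [Semiring R] (x s : ℕ) :
    (x : R) * (x + 1).ascFactorial s = (x + s) * x.ascFactorial s := by
  norm_cast; exact congrArg _ (succ_ascFactorial x s)

end Nat

/-- MacMahon's formula for the number of plane partitions that fit in an `a × b × c` box. -/
def macMahon (a b c : ℕ) : ℚ :=
  ∏ i ∈ Icc 1 a, ∏ j ∈ Icc 1 b, ((i : ℚ) + j + c - 1) / ((i : ℚ) + j - 1)

lemma macMahon_pos (a b c : ℕ) : 0 < macMahon a b c := by
  refine prod_pos fun i hi => prod_pos fun j hj => ?_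
  have hi : (1 : ℚ) ≤ i := by exact_mod_cast (mem_Icc.1 hi).1
  have hj : (1 : ℚ) ≤ j := by exact_mod_cast (mem_Icc.1 hj).1
  apply div_pos <;> linarith [(Nat.cast_nonneg c : (0 : ℚ) ≤ c)]

lemma macMahon_comm (a b c : ℕ) : macMahon a b c = macMahon b a c := by
  rw [macMahon, macMahon, prod_comm]
  refine prod_congr rfl fun i _ => prod_congr rfl fun j _ => ?_
  ring_nf

lemma macMahon_zero_left (b c : ℕ) : macMahon 0 b c = 1 := by simp [macMahon]

lemma macMahon_zero_height (a b : ℕ) : macMahon a b 0 = 1 := by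
  refine prod_eq_one fun i hi => prod_eq_one fun j hj => ?_
  have hi : (1 : ℚ) ≤ i := by exact_mod_cast (mem_Icc.1 hi).1
  have hj : (1 : ℚ) ≤ j := by exact_mod_cast (mem_Icc.1 hj).1
  rw [Nat.cast_zero, add_zero, div_self (by linarith)]

lemma macMahon_succ_left (a b c : ℕ) :
    macMahon (a + 1) b c
      = macMahon a b c * (a + c + 1).ascFactorial b / (a + 1).ascFactorial b := by
  rw [macMahon, prod_Icc_succ_top (by omega), mul_div_assoc, Nat.cast_succ_ascFactorial_eq_prod,
    Nat.cast_succ_ascFactorial_eq_prod, ← prod_div_distrib]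
  congr 1
  refine prod_congr rfl fun j _ => ?_
  push_cast; ring_nf

lemma macMahon_succ_right (a b c : ℕ) :
    macMahon a (b + 1) c
      = macMahon a b c * (b + c + 1).ascFactorial a / (b + 1).ascFactorial a := by
  rw [macMahon_comm, macMahon_succ_left, macMahon_comm]

lemma macMahon_succ_height (a b c : ℕ) :
    macMahon a b (c + 1)
      = macMahon a b c * (b + c + 1).ascFactorial a / (c + 1).ascFactorial a := by
  induction a with
  | zero => simp [macMahon_zero_left]
  | succ a ih =>
    rw [macMahon_succ_left, ih, macMahon_succ_left, Nat.cast_ascFactorial_succ,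
      Nat.cast_ascFactorial_succ]
    have h := Nat.cast_mul_succ_ascFactorial (R := ℚ) (a + c + 1) b
    rw [show a + (c + 1) + 1 = a + c + 1 + 1 by omega]
    push_cast at h ⊢
    field_simp
    linear_combination macMahon a b c * h

lemma macMahon_one_height (a b : ℕ) : macMahon a b 1 = (a + b).choose a := by
  induction a with
  | zero => simp [macMahon_zero_left]
  | succ a ih =>
    have h := Nat.cast_mul_succ_ascFactorial (R := ℚ) (a + 1) b
    have hchoose :
        ((a + b + 1 : ℕ) : ℚ) * (a + b).choose a = (a + b + 1).choose (a + 1) * (a + 1) := by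
      exact_mod_cast Nat.add_one_mul_choose_eq (a + b) a
    rw [macMahon_succ_left, ih, show a + 1 + b = a + b + 1 by omega]
    push_cast at h hchoose ⊢
    field_simp
    refine mul_left_cancel₀ (by positivity : (a + 1 : ℚ) ≠ 0) ?_
    linear_combination (↑((a + b).choose a) : ℚ) * h + ↑((a + 1).ascFactorial b) * hchoose

lemma macMahon_contiguity_height (a b c : ℕ) :
    macMahon a b (c + 2) * macMahon (a + 1) (b + 1) c * (a + b + c + 2)
      = macMahon a b (c + 1) * macMahon (a + 1) (b + 1) (c + 1) * (c + 1) := by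
  rw [macMahon_succ_height a b (c + 1), macMahon_succ_height (a + 1) (b + 1) c,
    show b + 1 + c + 1 = b + (c + 1) + 1 by omega, Nat.cast_ascFactorial_succ,
    Nat.cast_ascFactorial_succ]
  have h := Nat.cast_mul_succ_ascFactorial (R := ℚ) (c + 1) a
  push_cast at h ⊢
  field_simp
  linear_combination
    -(macMahon a b (c + 1) * macMahon (a + 1) (b + 1) c * (a + b + c + 2)) * h

lemma macMahon_contiguity_mixed (a b c : ℕ) :
    macMahon a b c * macMahon (a + 1) (b + 1) c * (a + b + 1)
      = macMahon a (b + 1) c * macMahon (a + 1) b c * (a + b + c + 1) := by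
  rw [macMahon_succ_left a (b + 1), macMahon_succ_left a b, Nat.cast_ascFactorial_succ,
    Nat.cast_ascFactorial_succ]
  push_cast
  field_simp
  ring

lemma macMahon_contiguity_right (a b c : ℕ) :
    macMahon a b c * macMahon a (b + 2) c * ((b + c + 1) * (a + b + 1))
      = macMahon a (b + 1) c ^ 2 * ((a + b + c + 1) * (b + 1)) := by
  rw [macMahon_succ_right a (b + 1), macMahon_succ_right a b,
    show b + 1 + c + 1 = b + c + 1 + 1 by omega]
  have h₁ := Nat.cast_mul_succ_ascFactorial (R := ℚ) (b + c + 1) a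
  have h₂ := Nat.cast_mul_succ_ascFactorial (R := ℚ) (b + 1) a
  push_cast at h₁ h₂ ⊢
  field_simp
  linear_combination macMahon a b c ^ 2 * (b + 1).ascFactorial a * (a + b + 1) * h₁
    - macMahon a b c ^ 2 * (b + c + 1).ascFactorial a * (a + b + c + 1) * h₂

lemma macMahon_condensation_square (a c : ℕ) :
    macMahon a a (c + 2) * macMahon (a + 1) (a + 1) c
      = macMahon a a (c + 1) * macMahon (a + 1) (a + 1) (c + 1)
        - macMahon a (a + 1) (c + 1) ^ 2 := by
  have h₁ := macMahon_contiguity_height a a c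
  have h₂ := macMahon_contiguity_mixed a a (c + 1)
  rw [macMahon_comm (a + 1) a] at h₂
  refine mul_right_cancel₀ (b := (2 * a + c + 2 : ℚ)) (by positivity) ?_
  push_cast at h₁ h₂
  linear_combination h₁ - h₂

lemma macMahon_condensation_near_square (a c : ℕ) :
    macMahon (a + 1) (a + 1) (c + 1) ^ 2
      = macMahon a (a + 1) (c + 1) * macMahon (a + 1) (a + 2) (c + 1)
        + macMahon a (a + 1) (c + 2) * macMahon (a + 1) (a + 2) c := by
  have h₁ := macMahon_contiguity_height a (a + 1) c
  have h₂ := macMahon_contiguity_right (a + 1) a (c + 1)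
  rw [macMahon_comm (a + 1) a] at h₂
  refine mul_right_cancel₀ (b := ((2 * a + c + 3) * (a + 1) : ℚ)) (by positivity) ?_
  push_cast at h₁ h₂
  linear_combination -h₂ - (a + 1) * h₁

def centralMacMahon (k n : ℕ) : ℚ := macMahon (k / 2) ((k + 1) / 2) n

lemma centralMacMahon_pos (k n : ℕ) : 0 < centralMacMahon k n := macMahon_pos _ _ _

lemma centralMacMahon_condensation (k n : ℕ) :
    (-1) ^ k * centralMacMahon k (n + 2) * centralMacMahon (k + 2) n
      = centralMacMahon k (n + 1) * centralMacMahon (k + 2) (n + 1)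
        - centralMacMahon (k + 1) (n + 1) ^ 2 := by
  obtain ⟨a, rfl | rfl⟩ := Nat.even_or_odd' k
  · simp only [centralMacMahon, show 2 * a / 2 = a by omega, show (2 * a + 1) / 2 = a by omega,
      show (2 * a + 2) / 2 = a + 1 by omega, show (2 * a + 2 + 1) / 2 = a + 1 by omega]
    rw [(even_two_mul a).neg_one_pow, one_mul, macMahon_condensation_square]
  · simp only [centralMacMahon, show (2 * a + 1) / 2 = a by omega,
      show (2 * a + 1 + 1) / 2 = a + 1 by omega, show (2 * a + 1 + 2) / 2 = a + 1 by omega,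
      show (2 * a + 1 + 2 + 1) / 2 = a + 2 by omega]
    rw [(odd_two_mul_add_one a).neg_one_pow, macMahon_condensation_near_square]
    ring

lemma centralMacMahon_succ (k n : ℕ) :
    centralMacMahon (k + 1) n = centralMacMahon k n
      * (k / 2 + n + 1).ascFactorial ((k + 1) / 2) / (k / 2 + 1).ascFactorial ((k + 1) / 2) := by
  obtain ⟨a, rfl | rfl⟩ := Nat.even_or_odd' k
  · simp only [centralMacMahon, show 2 * a / 2 = a by omega, show (2 * a + 1) / 2 = a by omega,
      show (2 * a + 1 + 1) / 2 = a + 1 by omega, macMahon_succ_right, add_right_comm a n 1]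
  · simp only [centralMacMahon, show (2 * a + 1) / 2 = a by omega,
      show (2 * a + 1 + 1) / 2 = a + 1 by omega, show (2 * a + 1 + 1 + 1) / 2 = a + 1 by omega,
      macMahon_succ_left, add_right_comm a n 1]

lemma Finset.prod_pow_min_Icc_succ {M : Type*} [CommMonoid M] (x : ℕ → M) (k : ℕ) :
    ∏ j ∈ Icc 1 (k + 1), x j ^ min j (k + 1 - j)
      = (∏ j ∈ Icc 1 k, x j ^ min j (k - j)) * ∏ j ∈ Icc (k / 2 + 1) k, x j := by
  have hfilter : Icc (k / 2 + 1) k = (Icc 1 k).filter (k / 2 + 1 ≤ ·) := by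
    ext j; simp only [mem_Icc, mem_filter]; omega
  rw [prod_Icc_succ_top (by omega), Nat.sub_self, Nat.min_zero, pow_zero, mul_one, hfilter,
    prod_filter, ← prod_mul_distrib]
  refine prod_congr rfl fun j hj => ?_
  have := mem_Icc.1 hj
  split_ifs
  · rw [← pow_succ]; congr 1; omega
  · rw [mul_one]; congr 1; omega

lemma prod_Icc_add_div_self (m s n : ℕ) :
    ∏ j ∈ Icc (m + 1) (m + s), ((j : ℚ) + n) / j
      = (m + n + 1).ascFactorial s / (m + 1).ascFactorial s := by
  rw [← map_add_left_Icc, prod_map, Nat.cast_succ_ascFactorial_eq_prod,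
    Nat.cast_succ_ascFactorial_eq_prod, ← prod_div_distrib]
  refine prod_congr rfl fun j _ => ?_
  push_cast [addLeftEmbedding_apply]; ring

lemma prod_pow_min_eq_centralMacMahon (k n : ℕ) :
    ∏ j ∈ Icc 1 k, (((j : ℚ) + n) / j) ^ min j (k - j) = centralMacMahon k n := by
  induction k with
  | zero => simp [centralMacMahon, macMahon_zero_left]
  | succ k ih =>
    rw [Finset.prod_pow_min_Icc_succ, ih, centralMacMahon_succ, mul_div_assoc,
      ← prod_Icc_add_div_self, show k / 2 + (k + 1) / 2 = k by omega]

def midBinom (m : ℕ) : ℚ := m.choose (m / 2)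

lemma neg_one_pow_mul_choose_two_add_two (k n : ℕ) :
    (-1 : ℚ) ^ (k * (n + 2).choose 2) * (-1) ^ ((k + 2) * n.choose 2) = (-1) ^ k := by
  have hchoose : (n + 2).choose 2 = n.choose 2 + 2 * n + 1 := by
    simp only [Nat.choose_succ_succ, Nat.choose_one_right, Nat.choose_zero_right]; ring
  rw [← pow_add, show k * (n + 2).choose 2 + (k + 2) * n.choose 2
      = k + 2 * ((k + 1) * n.choose 2 + k * n) by rw [hchoose]; ring,
    pow_add, pow_mul, neg_one_sq, one_pow, mul_one]

theorem det_hankel_midBinom (k n : ℕ) :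
    (hankel midBinom k n).det = (-1) ^ (k * n.choose 2) * centralMacMahon k n := by
  induction n using Nat.twoStepInduction generalizing k with
  | zero => simp [centralMacMahon, macMahon_zero_height]
  | one =>
    rw [det_fin_one, Nat.choose_eq_zero_of_lt (by norm_num), mul_zero, pow_zero, one_mul,
      centralMacMahon, macMahon_one_height, show k / 2 + (k + 1) / 2 = k by omega]
    rfl
  | more n ih₀ ih₁ =>
    have hne : (hankel midBinom (k + 2) n).det ≠ 0 := by
      rw [ih₀]; exact mul_ne_zero (pow_ne_zero _ (by norm_num)) (centralMacMahon_pos _ _).ne'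
    have hc := det_hankel_condensation midBinom k n hne
    rw [ih₀, ih₁, ih₁, ih₁] at hc
    have hsign₁ :
        (-1 : ℚ) ^ (k * (n + 1).choose 2) * (-1) ^ ((k + 2) * (n + 1).choose 2) = 1 := by
      rw [← pow_add]; exact Even.neg_one_pow ⟨(k + 1) * (n + 1).choose 2, by ring⟩
    have hsign₂ : ((-1 : ℚ) ^ ((k + 1) * (n + 1).choose 2)) ^ 2 = 1 := by
      rw [← pow_mul, pow_mul', neg_one_sq, one_pow]
    refine mul_right_cancel₀ hne ?_
    rw [ih₀]
    linear_combination hc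
      + centralMacMahon k (n + 1) * centralMacMahon (k + 2) (n + 1) * hsign₁
      - centralMacMahon (k + 1) (n + 1) ^ 2 * hsign₂
      - centralMacMahon k (n + 2) * centralMacMahon (k + 2) n
        * neg_one_pow_mul_choose_two_add_two k n
      - centralMacMahon_condensation k n

theorem stmt6_general (k n : ℕ) :
    ((-1 : ℚ) ^ (k * n.choose 2) *
        Matrix.det (Matrix.of fun i j : Fin n =>
          (((k + i.val + j.val).choose ((k + i.val + j.val) / 2) : ℕ) : ℚ))
      = ∏ j ∈ Finset.Icc 1 k, (((j : ℚ) + n) / (j : ℚ)) ^ (min j (k - j)))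
    ∧
    (∏ j ∈ Finset.Icc 1 k, (((j : ℚ) + n) / (j : ℚ)) ^ (min j (k - j))
      = ∏ i ∈ Finset.Icc 1 (k / 2), ∏ j ∈ Finset.Icc 1 ((k + 1) / 2),
          ((i : ℚ) + j + n - 1) / ((i : ℚ) + j - 1)) := by
  refine ⟨?_, prod_pow_min_eq_centralMacMahon k n⟩
  change (-1) ^ (k * n.choose 2) * (hankel midBinom k n).det = _
  rw [det_hankel_midBinom, ← mul_assoc, ← pow_add, Even.neg_one_pow ⟨_, rfl⟩, one_mul,
    prod_pow_min_eq_centralMacMahon]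

/-- Theorem 1: for `k ≥ 0` and `n ≥ 1`, the Hankel determinant
`D_k(n) = det(C(k+i+j, ⌊(k+i+j)/2⌋))_{i,j=0}^{n-1}` of the middle binomial
coefficients satisfies
`(-1)^(k·C(n,2)) · D_k(n) = ∏_{j=1}^k ((j+n)/j)^(min(j,k-j))
  = ∏_{i=1}^{⌊k/2⌋} ∏_{j=1}^{⌈k/2⌉} (i+j+n-1)/(i+j-1)`,
as an equality of rational numbers. -/
theorem stmt6 (k n : ℕ) (hn : 1 ≤ n) :
    ((-1 : ℚ) ^ (k * n.choose 2) *
        Matrix.det (Matrix.of fun i j : Fin n =>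
          (((k + i.val + j.val).choose ((k + i.val + j.val) / 2) : ℕ) : ℚ))
      = ∏ j ∈ Finset.Icc 1 k, (((j : ℚ) + n) / (j : ℚ)) ^ (min j (k - j)))
    ∧
    (∏ j ∈ Finset.Icc 1 k, (((j : ℚ) + n) / (j : ℚ)) ^ (min j (k - j))
      = ∏ i ∈ Finset.Icc 1 (k / 2), ∏ j ∈ Finset.Icc 1 ((k + 1) / 2),
          ((i : ℚ) + j + n - 1) / ((i : ℚ) + j - 1)) :=
  stmt6_general k n
end

section
/- For every natural number k ≥ 0, the identity of rational functions r_k(x) = s_k(x) holds, where r_k(x) = ∏_{j=1}^{k} ((x+j)/j)^{min(j, k-j)} and s_k(x) = ∏_{i=1}^{⌊k/2⌋} ∏_{j=1}^{⌈k/2⌉} (x+i+j-1)/(i+j-1). -/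
/- Grouping the factors of `s_k` by `m = i + j - 1`, every factor with the same `m` equals
`(x + m) / m`, and the number of pairs `(i, j) ∈ [1, ⌊k/2⌋] × [1, ⌈k/2⌉]` on the antidiagonal
`i + j - 1 = m` is `min m (k - m)`, which is the exponent of that factor in `r_k`. -/

/-- The rational function `r_k(x) = ∏_{j=1}^k ((x+j)/j)^(min(j,k-j))`. -/
noncomputable def r (k : ℕ) : RatFunc ℚ :=
  ∏ j ∈ Finset.Icc 1 k, ((RatFunc.X + (j : RatFunc ℚ)) / (j : RatFunc ℚ)) ^ (min j (k - j))

/-- The rational function `s_k(x) = ∏_{i=1}^{⌊k/2⌋} ∏_{j=1}^{⌈k/2⌉} (x+i+j-1)/(i+j-1)`. -/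
noncomputable def s (k : ℕ) : RatFunc ℚ :=
  ∏ i ∈ Finset.Icc 1 (k / 2), ∏ j ∈ Finset.Icc 1 ((k + 1) / 2),
    (RatFunc.X + (i : RatFunc ℚ) + (j : RatFunc ℚ) - 1) / ((i : RatFunc ℚ) + (j : RatFunc ℚ) - 1)

open Finset

theorem card_filter_Icc_product_add_sub_one_eq (a b m : ℕ) :
    #{p ∈ Icc 1 a ×ˢ Icc 1 b | p.1 + p.2 - 1 = m} = min (min m a) (min b (a + b - m)) := by
  have hfiber : {p ∈ Icc 1 a ×ˢ Icc 1 b | p.1 + p.2 - 1 = m}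
      = (Icc (max 1 (m + 1 - b)) (min a m)).image (fun i => (i, m + 1 - i)) := by
    ext ⟨i, j⟩
    simp only [mem_filter, mem_product, mem_Icc, mem_image, Prod.mk.injEq]
    constructor
    · rintro ⟨⟨⟨hi1, hi2⟩, hj1, hj2⟩, hm⟩
      exact ⟨i, ⟨by omega, by omega⟩, rfl, by omega⟩
    · rintro ⟨i, hi, rfl, rfl⟩
      omega
  rw [hfiber, card_image_of_injective _ (fun x y h => congrArg Prod.fst h), Nat.card_Icc]
  omega

theorem prod_Icc_prod_Icc_add_sub_one {M : Type*} [CommMonoid M] (f : ℕ → M) (a b : ℕ) :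
    ∏ i ∈ Icc 1 a, ∏ j ∈ Icc 1 b, f (i + j - 1)
      = ∏ m ∈ Icc 1 (a + b), f m ^ min (min m a) (min b (a + b - m)) := by
  have hmaps : ∀ p ∈ Icc 1 a ×ˢ Icc 1 b, p.1 + p.2 - 1 ∈ Icc 1 (a + b) := by
    simp only [mem_product, mem_Icc]
    omega
  rw [← prod_product', ← prod_fiberwise_of_maps_to hmaps]
  refine prod_congr rfl fun m _ => ?_
  rw [prod_congr rfl fun p hp => congrArg f (mem_filter.mp hp).2, prod_const,
    card_filter_Icc_product_add_sub_one_eq]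

theorem s_eq_prod_Icc_prod_Icc (k : ℕ) :
    s k = ∏ i ∈ Icc 1 (k / 2), ∏ j ∈ Icc 1 ((k + 1) / 2),
      (RatFunc.X + ((i + j - 1 : ℕ) : RatFunc ℚ)) / ((i + j - 1 : ℕ) : RatFunc ℚ) := by
  refine prod_congr rfl fun i hi => prod_congr rfl fun j _ => ?_
  rw [Nat.cast_sub (by simp only [mem_Icc] at hi; omega), Nat.cast_add, Nat.cast_one]
  ring

/-- For every `k ≥ 0`, the identity of rational functions `r_k(x) = s_k(x)` holds. -/
theorem stmt7 (k : ℕ) : r k = s k := by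
  rw [s_eq_prod_Icc_prod_Icc,
    prod_Icc_prod_Icc_add_sub_one (fun m => (RatFunc.X + (m : RatFunc ℚ)) / (m : RatFunc ℚ)), r,
    show k / 2 + (k + 1) / 2 = k by omega]
  refine prod_congr rfl fun m _ => ?_
  congr 1
  omega
end

section
/- For every natural number k ≥ 2, the identity of rational functions r_k(x)·r_{k-2}(x) = (-1)^k · r_{k-2}(x+1)·r_k(x-1) + r_{k-1}(x)² holds. -/
/-!
Write `r_k(y) = N_k(y) / C_k` with `N_k(y) = ∏ (y + j) ^ min(j, k - j)` and
`C_k = ∏ j ^ min(j, k - j)`. In `r_k r_{k-2} / r_{k-1}²` the exponents combine to the second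
difference in `k` of the tent `min(j, k - j)`, which only survives at `j = k - 1` and at the apex
`j = m` when `k = 2m + 1`. In `r_{k-2}(x+1) r_k(x-1) / r_{k-1}²` the shifts turn this into a second
difference in `j`, which only survives at `j = 0` and at the same apex. Hence, with
`F_c = (x + c) / c` and `ε = F_m` for odd `k`, `ε = 1` for even `k`,
  `r_k r_{k-2} ε = r_{k-1}² F_{k-1}`  and  `r_{k-2}(x+1) r_k(x-1) ε = r_{k-1}² x / (k - 1)`,
and the identity follows from `F_{k-1} - x/(k-1) = 1` for even `k` and
`F_{2m} + x/(2m) = F_m` for odd `k`.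
-/

/-- `rf k y = ∏_{j=1}^k ((y+j)/j)^(min(j,k-j))`, i.e. the rational function
`r_k` evaluated at an arbitrary rational-function argument `y` (so that
`rf k (X+1)` is `r_k(x+1)`, etc.). -/
noncomputable def rf (k : ℕ) (y : RatFunc ℚ) : RatFunc ℚ :=
  ∏ j ∈ Finset.Icc 1 k, ((y + (j : RatFunc ℚ)) / (j : RatFunc ℚ)) ^ (min j (k - j))

open Finset

section TentProduct

variable {M : Type*} [CommMonoid M]

def tentProd (g : ℕ → M) (k : ℕ) : M :=
  ∏ j ∈ Icc 1 k, g j ^ min j (k - j)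

lemma tentProd_eq_prod_range (g : ℕ → M) {k N : ℕ} (hN : k < N) :
    tentProd g k = ∏ j ∈ range N, g j ^ min j (k - j) := by
  refine prod_subset (fun j hj => ?_) (fun j _ hj => ?_)
  · simp only [mem_Icc, mem_range] at hj ⊢; omega
  · simp only [mem_Icc, not_and_or, not_le] at hj
    rw [show min j (k - j) = 0 by omega, pow_zero]

lemma tentProd_congr {g h : ℕ → M} {k : ℕ} (hgh : ∀ j, 1 ≤ j → g j = h j) :
    tentProd g k = tentProd h k :=
  prod_congr rfl fun j hj => by rw [hgh j (mem_Icc.mp hj).1]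

lemma prod_pow_mul_pow_of_mem {ι : Type*} [DecidableEq ι] (s : Finset ι) (g : ι → M)
    (a : ι → ℕ) {c : ι} (hc : c ∈ s) (u : ℕ) :
    (∏ j ∈ s, g j ^ a j) * g c ^ u = ∏ j ∈ s, g j ^ (a j + if j = c then u else 0) := by
  simp_rw [pow_add, prod_mul_distrib, pow_ite, pow_zero, prod_ite_eq' s c, if_pos hc]

lemma prod_pow_mul_prod_pow {ι : Type*} (s : Finset ι) (g : ι → M) (a b : ι → ℕ) :
    (∏ j ∈ s, g j ^ a j) * (∏ j ∈ s, g j ^ b j) = ∏ j ∈ s, g j ^ (a j + b j) := by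
  simp_rw [pow_add, prod_mul_distrib]

lemma prod_pow_sq {ι : Type*} (s : Finset ι) (g : ι → M) (a : ι → ℕ) :
    (∏ j ∈ s, g j ^ a j) ^ 2 = ∏ j ∈ s, g j ^ (a j + a j) := by
  rw [sq, prod_pow_mul_prod_pow]

/-- As a function of `k`, the exponent `min j (k - j)` is a tent with kinks at `k = j` and
`k = 2 * j`, so its second difference at `k = n + 1` is concentrated at `j = n + 1` and,
for odd `n`, at the apex `j = (n + 1) / 2`. -/
lemma tentProd_add_two_mul_tentProd (g : ℕ → M) (n : ℕ) :
    tentProd g (n + 2) * tentProd g n * g ((n + 1) / 2) ^ (n % 2)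
      = tentProd g (n + 1) ^ 2 * g (n + 1) := by
  rw [tentProd_eq_prod_range g (show n + 2 < n + 3 by omega),
    tentProd_eq_prod_range g (show n < n + 3 by omega),
    tentProd_eq_prod_range g (show n + 1 < n + 3 by omega), prod_pow_mul_prod_pow, prod_pow_sq,
    ← pow_one (g (n + 1)), prod_pow_mul_pow_of_mem _ _ _ (mem_range.mpr (by omega)),
    prod_pow_mul_pow_of_mem _ _ _ (mem_range.mpr (by omega))]
  refine prod_congr rfl fun j hj => ?_
  rw [mem_range] at hj
  congr 1
  split_ifs <;> omega

lemma tentProd_comp_succ_eq_prod_range (g : ℕ → M) (n : ℕ) :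
    tentProd (fun j => g (j + 1)) n
      = ∏ j ∈ range (n + 3), g j ^ min (j - 1) (n - (j - 1)) := by
  rw [tentProd_eq_prod_range _ (N := n + 2) (by omega), prod_range_succ' _ (n + 2)]
  simp

lemma tentProd_comp_pred_eq_prod_range (g : ℕ → M) (n : ℕ) :
    tentProd (fun j => g (j - 1)) (n + 2)
      = ∏ j ∈ range (n + 3), g j ^ min (j + 1) (n + 1 - j) := by
  rw [tentProd_eq_prod_range _ (N := n + 4) (by omega), prod_range_succ' _ (n + 3)]
  simp

/-- Shifting the argument of `g` moves the exponents to `j ∓ 1`; their second difference in `j`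
is concentrated at `j = 0` and, for odd `n`, at the apex `j = (n + 1) / 2`. -/
lemma tentProd_comp_succ_mul_tentProd_comp_pred (g : ℕ → M) (n : ℕ) :
    tentProd (fun j => g (j + 1)) n * tentProd (fun j => g (j - 1)) (n + 2)
        * g ((n + 1) / 2) ^ (n % 2) = tentProd g (n + 1) ^ 2 * g 0 := by
  rw [tentProd_comp_succ_eq_prod_range, tentProd_comp_pred_eq_prod_range,
    tentProd_eq_prod_range g (show n + 1 < n + 3 by omega), prod_pow_mul_prod_pow, prod_pow_sq,
    ← pow_one (g 0), prod_pow_mul_pow_of_mem _ _ _ (mem_range.mpr (by omega)),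
    prod_pow_mul_pow_of_mem _ _ _ (mem_range.mpr (by omega))]
  refine prod_congr rfl fun j hj => ?_
  rw [mem_range] at hj
  congr 1
  split_ifs <;> omega

end TentProduct

lemma X_add_natCast_ne_zero (c : ℕ) : (RatFunc.X : RatFunc ℚ) + c ≠ 0 := by
  have h : (RatFunc.X : RatFunc ℚ) + c
      = algebraMap (Polynomial ℚ) (RatFunc ℚ) (Polynomial.X + Polynomial.C (c : ℚ)) := by
    simp
  rw [h]
  exact RatFunc.algebraMap_ne_zero (Polynomial.X_add_C_ne_zero _)

lemma rf_eq_tentProd (k : ℕ) (y : RatFunc ℚ) :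
    rf k y = tentProd (fun j : ℕ => y + j) k / tentProd (fun j : ℕ => (j : RatFunc ℚ)) k := by
  simp_rw [rf, tentProd, div_pow, prod_div_distrib]

lemma rf_add_two_mul_rf (n : ℕ) (y : RatFunc ℚ) :
    rf (n + 2) y * rf n y * ((y + ((n + 1) / 2 : ℕ)) / ((n + 1) / 2 : ℕ)) ^ (n % 2)
      = rf (n + 1) y ^ 2 * ((y + (n + 1 : ℕ)) / (n + 1 : ℕ)) :=
  tentProd_add_two_mul_tentProd (fun j : ℕ => (y + j) / j) n

lemma rf_add_one_mul_rf_sub_one (n : ℕ) (y : RatFunc ℚ) :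
    rf n (y + 1) * rf (n + 2) (y - 1) * ((y + ((n + 1) / 2 : ℕ)) / ((n + 1) / 2 : ℕ)) ^ (n % 2)
      = rf (n + 1) y ^ 2 * (y / (n + 1 : ℕ)) := by
  have hnum := tentProd_comp_succ_mul_tentProd_comp_pred (fun j : ℕ => y + j) n
  have hden := tentProd_add_two_mul_tentProd (fun j : ℕ => (j : RatFunc ℚ)) n
  have hsucc : (fun j : ℕ => y + ((j + 1 : ℕ) : RatFunc ℚ)) = fun j : ℕ => y + 1 + j := by
    funext j; push_cast; ring
  have hpred : tentProd (fun j : ℕ => y + ((j - 1 : ℕ) : RatFunc ℚ)) (n + 2)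
      = tentProd (fun j : ℕ => y - 1 + j) (n + 2) :=
    tentProd_congr fun j hj => by push_cast [Nat.cast_sub hj]; ring
  simp only [hsucc, hpred, Nat.cast_zero, add_zero] at hnum
  simp only [rf_eq_tentProd, div_pow]
  rw [div_mul_div_comm, div_mul_div_comm, hnum, mul_comm (tentProd _ n), hden, div_mul_div_comm]

/-- For every `k ≥ 2`, the identity of rational functions
`r_k(x)·r_{k-2}(x) = (-1)^k·r_{k-2}(x+1)·r_k(x-1) + r_{k-1}(x)²` holds. -/
theorem stmt10 (k : ℕ) (hk : 2 ≤ k) :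
    rf k RatFunc.X * rf (k - 2) RatFunc.X
      = (-1) ^ k * rf (k - 2) (RatFunc.X + 1) * rf k (RatFunc.X - 1)
        + (rf (k - 1) RatFunc.X) ^ 2 := by
  obtain ⟨n, rfl⟩ := Nat.exists_eq_add_of_le' hk
  have hA := rf_add_two_mul_rf n RatFunc.X
  have hB := rf_add_one_mul_rf_sub_one n RatFunc.X
  rw [Nat.add_sub_cancel, show n + 2 - 1 = n + 1 by omega, pow_add, neg_one_sq, mul_one]
  set x : RatFunc ℚ := RatFunc.X
  rcases Nat.even_or_odd' n with ⟨m, rfl | rfl⟩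
  · have hF : (x + (2 * m + 1 : ℕ)) / ((2 * m + 1 : ℕ) : RatFunc ℚ)
        = x / ((2 * m + 1 : ℕ) : RatFunc ℚ) + 1 := by
      rw [add_div, div_self (Nat.cast_ne_zero.mpr (by omega))]
    simp only [Nat.mul_mod_right, pow_zero, mul_one, hF] at hA hB
    rw [(even_two_mul m).neg_one_pow]
    linear_combination hA - hB
  · have hF : (x + (m + 1 : ℕ)) / ((m + 1 : ℕ) : RatFunc ℚ) ≠ 0 :=
      div_ne_zero (X_add_natCast_ne_zero _) (Nat.cast_ne_zero.mpr (by omega))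
    have hdouble : ((2 * m + 1 + 1 : ℕ) : RatFunc ℚ) = 2 * (m + 1 : ℕ) := by push_cast; ring
    simp only [show (2 * m + 1 + 1) / 2 = m + 1 by omega, Nat.mul_add_mod_self_left, Nat.one_mod,
      pow_one, hdouble] at hA hB
    rw [(odd_two_mul_add_one m).neg_one_pow]
    refine mul_right_cancel₀ hF ?_
    linear_combination hA + hB
end

section
/- For all natural numbers a, b ≥ 1, the formal power series Σ_{n≥b} v_{a,b}(n)·x^{n+a-b-1} (which is well defined since v_{a,b}(n) = 0 for all natural numbers n with 0 ≤ n ≤ b-1, and all occurring exponents n+a-b-1 are ≥ a-1 ≥ 0) equals the power series expansion at 0 of the rational function F_a^b(x). -/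
/-! `F_a^b` is computed coefficientwise: one application of `X^(a-1) D^a` multiplies the
coefficient of `x^(k+a)` by the ascending factorial `(k+1)(k+2)⋯(k+a)` and moves it to
`x^(k+a-1)`, and this factor is exactly the new row `i = b+1` of the double product defining
`v_{a,b+1}(k+b+1)`. Induction on `b` then matches the two series. -/

/-- `v_{a,b}(n) = ∏_{j=1}^a ∏_{i=1}^b (n + j - i)` (as a rational number). -/
def vval (a b n : ℕ) : ℚ :=
  ∏ j ∈ Finset.Icc 1 a, ∏ i ∈ Finset.Icc 1 b, ((n : ℚ) + (j : ℚ) - (i : ℚ))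

/-- The power series expansion at `0` of the rational function `F_a^b(x)`, obtained by
applying the operator `X^(a-1) D^a` (first differentiate `a` times, then multiply by
`x^(a-1)`) `b` times to `1/(1-x)`. -/
noncomputable def Fab (a b : ℕ) : PowerSeries ℚ :=
  (fun f => PowerSeries.X ^ (a - 1) * (PowerSeries.derivativeFun^[a] f))^[b]
    ((1 - PowerSeries.X : PowerSeries ℚ)⁻¹)

open PowerSeries

theorem Nat.cast_succ_ascFactorial_eq_prod_Icc {R : Type*} [CommSemiring R] (k a : ℕ) :
    ((k + 1).ascFactorial a : R) = ∏ j ∈ Finset.Icc 1 a, ((k : R) + j) := by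
  induction a with
  | zero => simp
  | succ a ih =>
    rw [Finset.prod_Icc_succ_top (by omega), ← ih, Nat.ascFactorial_succ]
    push_cast
    ring

theorem vval_zero (a n : ℕ) : vval a 0 n = 1 := by
  simp [vval]

theorem vval_succ (a b n : ℕ) :
    vval a (b + 1) n = vval a b n * ∏ j ∈ Finset.Icc 1 a, ((n : ℚ) + j - (b + 1)) := by
  rw [vval, vval, ← Finset.prod_mul_distrib]
  refine Finset.prod_congr rfl fun j _ => ?_
  rw [Finset.prod_Icc_succ_top (by omega)]
  push_cast
  ring

theorem vval_succ_add (a b k : ℕ) :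
    vval a (b + 1) (k + b + 1) = (k + 1).ascFactorial a * vval a b (k + b + 1) := by
  rw [vval_succ, Nat.cast_succ_ascFactorial_eq_prod_Icc, mul_comm]
  congr 1
  refine Finset.prod_congr rfl fun j _ => ?_
  push_cast
  ring

theorem X_pow_pred_mul_iterate_derivative_eq_mk_vval {a : ℕ} (ha : 1 ≤ a) (b : ℕ) (f : ℚ⟦X⟧)
    (hf : ∀ k, coeff (k + a) f = vval a b (k + b + 1)) :
    X ^ (a - 1) * (d⁄dX ℚ)^[a] f
      = mk fun m => if a ≤ m + 1 then vval a (b + 1) (m + 1 + (b + 1) - a) else 0 := by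
  ext m
  rw [coeff_X_pow_mul', coeff_mk]
  by_cases h : a ≤ m + 1
  · obtain ⟨k, hk⟩ : ∃ k, m = k + (a - 1) := ⟨m - (a - 1), by omega⟩
    rw [if_pos (by omega), if_pos h, coeff_iterate_derivative,
      show m - (a - 1) = k by omega, show m + 1 + (b + 1) - a = k + b + 1 by omega, hf,
      vval_succ_add]
  · rw [if_neg (by omega), if_neg h]

theorem Fab_zero (a : ℕ) : Fab a 0 = mk 1 := by
  rw [Fab, Function.iterate_zero_apply, PowerSeries.inv_eq_iff_mul_eq_one (by simp),
    mk_one_mul_one_sub_eq_one]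

theorem Fab_succ (a b : ℕ) : Fab a (b + 1) = X ^ (a - 1) * (d⁄dX ℚ)^[a] (Fab a b) :=
  Function.iterate_succ_apply' _ _ _

/-- For `a, b ≥ 1`, the formal power series `Σ_{n ≥ b} v_{a,b}(n)·x^(n+a-b-1)` (all occurring
exponents are `≥ a-1 ≥ 0`; the coefficient of `x^m` is `v_{a,b}(m+1+b-a)` for `m ≥ a-1` and
`0` otherwise) equals the power series expansion at `0` of `F_a^b(x)`. -/
theorem stmt11 (a b : ℕ) (ha : 1 ≤ a) (hb : 1 ≤ b) :
    (PowerSeries.mk fun m => if a ≤ m + 1 then vval a b (m + 1 + b - a) else 0)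
      = Fab a b := by
  obtain ⟨b, rfl⟩ : ∃ c, b = c + 1 := ⟨b - 1, by omega⟩
  induction b with
  | zero =>
    rw [Fab_succ, Fab_zero]
    exact (X_pow_pred_mul_iterate_derivative_eq_mk_vval ha 0 _ fun k => by simp [vval_zero]).symm
  | succ b ih =>
    rw [Fab_succ, ← ih (by omega)]
    refine (X_pow_pred_mul_iterate_derivative_eq_mk_vval ha (b + 1) _ fun k => ?_).symm
    rw [coeff_mk, if_pos (by omega)]
    congr 1
    omega
end

section
/- For every natural number k ≥ 1, the formal power series Σ_{n≥0} r_{2k+1}(n)·x^{n+k-1} equals ∏_{j=0}^{k-1} (j!/(k+1+j)!) times the power series expansion at 0 of the rational function F_k^{k+1}(x). -/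
/-!
Applying `X^(a-1) D^a` to `∑ cₘ xᵐ` gives `∑ (m+1)^{(a)} c_{m+1} xᵐ` (falling factorial), so the
`m`-th coefficient of `F_k^{k+1}` is `∏_{i ≤ k} (m+1+i)^{(k)}`. On the other side, the exponent
`min(j, 2k+1-j)` in `r_{2k+1}` counts the ways to write `j - 1 = i + t` with `i ≤ k`, `t < k`, so
`r_{2k+1}(n) = ∏_{i ≤ k} ∏_{t < k} (n+1+i+t)/(1+i+t)`. Read row by row, the numerator is that
coefficient at `m = n + k - 1`; read column by column, the denominator is `∏_{j<k} (k+1+j)!/j!`.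
-/

/-- The value `r_k(n) = ∏_{j=1}^k ((n+j)/j)^(min(j,k-j))` of the polynomial `r_k`
at the natural number `n`. -/
def rVal (k n : ℕ) : ℚ :=
  ∏ j ∈ Finset.Icc 1 k, (((n : ℚ) + (j : ℚ)) / (j : ℚ)) ^ (min j (k - j))

open Finset PowerSeries

section GridProduct

variable {M : Type*} [CommMonoid M] (f : ℕ → M) {a b N : ℕ}

lemma prod_range_add_eq_prod_range_pow_ite (h : a + b ≤ N) :
    ∏ t ∈ range b, f (a + t) = ∏ s ∈ range N, f s ^ (if s ∈ Ico a (a + b) then 1 else 0) := by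
  simp only [pow_ite, pow_one, pow_zero]
  rw [prod_ite_mem, inter_eq_right.mpr fun s hs => mem_range.mpr (by grind),
    prod_Ico_eq_prod_range, Nat.add_sub_cancel_left]

/-- `min (min (s + 1) a) (min b (a + b - 1 - s))` is the number of ways to write `s = i + t`
with `i < a` and `t < b`. -/
lemma prod_range_prod_range_add_eq_prod_pow (h : a + b ≤ N) :
    ∏ i ∈ range a, ∏ t ∈ range b, f (i + t)
      = ∏ s ∈ range N, f s ^ min (min (s + 1) a) (min b (a + b - 1 - s)) := by
  induction a with
  | zero => simp
  | succ a ih =>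
    rw [prod_range_succ, ih (by omega),
      prod_range_add_eq_prod_range_pow_ite f (by omega : a + b ≤ N), ← prod_mul_distrib]
    refine prod_congr rfl fun s _ => ?_
    rw [← pow_add]
    congr 1
    simp only [mem_Ico]
    split_ifs <;> omega

end GridProduct

section IteratedDerivative

variable {R : Type*} [CommSemiring R] {a : ℕ}

lemma coeff_X_pow_mul_iterate_derivative (ha : 1 ≤ a) (f : R⟦X⟧) (m : ℕ) :
    coeff m (X ^ (a - 1) * (d⁄dX R)^[a] f) = (m + 1).descFactorial a * coeff (m + 1) f := by
  rw [coeff_X_pow_mul']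
  split_ifs with h
  · obtain ⟨n, rfl⟩ : ∃ n, m = n + (a - 1) := ⟨m - (a - 1), by omega⟩
    rw [coeff_iterate_derivative, Nat.add_sub_cancel, ← Nat.add_descFactorial_eq_ascFactorial,
      show n + (a - 1) + 1 = n + a by omega]
  · rw [Nat.descFactorial_of_lt (by omega), Nat.cast_zero, zero_mul]

lemma coeff_iterate_X_pow_mul_iterate_derivative (ha : 1 ≤ a) (b : ℕ) (f : R⟦X⟧) (m : ℕ) :
    coeff m ((fun g => X ^ (a - 1) * (d⁄dX R)^[a] g)^[b] f)
      = (∏ i ∈ range b, ((m + 1 + i).descFactorial a : R)) * coeff (m + b) f := by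
  induction b generalizing m with
  | zero => simp
  | succ b ih =>
    rw [Function.iterate_succ_apply', coeff_X_pow_mul_iterate_derivative ha, ih, prod_range_succ',
      ← mul_assoc, mul_comm _ ((m + 1 + 0).descFactorial a : R)]
    simp only [add_zero, add_assoc, add_comm 1]

end IteratedDerivative

lemma coeff_Fab {a : ℕ} (ha : 1 ≤ a) (b m : ℕ) :
    coeff m (Fab a b) = ∏ i ∈ range b, ((m + 1 + i).descFactorial a : ℚ) := by
  have geometric : (1 - X : ℚ⟦X⟧)⁻¹ = PowerSeries.mk 1 := by
    rw [PowerSeries.inv_eq_iff_mul_eq_one (by simp), mk_one_mul_one_sub_eq_one]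
  rw [Fab, geometric]
  exact (coeff_iterate_X_pow_mul_iterate_derivative ha b _ m).trans (by simp)

lemma cast_add_descFactorial (c k : ℕ) :
    ((c + k).descFactorial k : ℚ) = ∏ t ∈ range k, ((c : ℚ) + 1 + t) := by
  rw [Nat.add_descFactorial_eq_ascFactorial, Nat.ascFactorial_eq_prod_range]
  push_cast
  rfl

lemma cast_ascFactorial_eq_factorial_div (j k : ℕ) :
    ((j + 1).ascFactorial k : ℚ) = (j + k).factorial / j.factorial := by
  rw [← Nat.factorial_mul_ascFactorial j k, Nat.cast_mul]
  field_simp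

lemma rVal_two_mul_add_one_eq_prod_prod (k n : ℕ) :
    rVal (2 * k + 1) n
      = ∏ i ∈ range (k + 1), ∏ t ∈ range k, ((n : ℚ) + 1 + ↑(i + t)) / (1 + ↑(i + t)) := by
  rw [rVal, ← Ico_add_one_right_eq_Icc, prod_Ico_eq_prod_range,
    prod_range_prod_range_add_eq_prod_pow (fun s => ((n : ℚ) + 1 + s) / (1 + s))
      (by omega : k + 1 + k ≤ 2 * k + 1)]
  refine prod_congr rfl fun s hs => ?_
  rw [mem_range] at hs
  push_cast
  congr 1
  · ring_nf
  · omega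

lemma rVal_two_mul_add_one (k n : ℕ) :
    rVal (2 * k + 1) n
      = (∏ j ∈ range k, (j.factorial : ℚ) / (k + 1 + j).factorial)
        * ∏ i ∈ range (k + 1), ((n + k + i).descFactorial k : ℚ) := by
  have numerator : ∏ i ∈ range (k + 1), ((n + k + i).descFactorial k : ℚ)
      = ∏ i ∈ range (k + 1), ∏ t ∈ range k, ((n : ℚ) + 1 + ↑(i + t)) := by
    refine prod_congr rfl fun i _ => ?_
    rw [show n + k + i = n + i + k by ring, cast_add_descFactorial]
    push_cast
    ring_nf
  have denominator : ∏ j ∈ range k, ((k + 1 + j).factorial / j.factorial : ℚ)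
      = ∏ i ∈ range (k + 1), ∏ t ∈ range k, (1 + ((i + t : ℕ) : ℚ)) := by
    rw [prod_comm]
    refine prod_congr rfl fun j _ => ?_
    rw [show k + 1 + j = j + (k + 1) by ring, ← cast_ascFactorial_eq_factorial_div,
      Nat.ascFactorial_eq_prod_range]
    push_cast
    ring_nf
  rw [rVal_two_mul_add_one_eq_prod_prod, numerator, ← inv_inv (∏ j ∈ range k, _ / _),
    ← prod_inv_distrib]
  simp only [inv_div]
  rw [denominator, ← div_eq_inv_mul]
  simp only [prod_div_distrib]

/-- For `k ≥ 1`, the formal power series `Σ_{n ≥ 0} r_{2k+1}(n)·x^(n+k-1)` equals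
`∏_{j=0}^{k-1}  (j!/(k+1+j)!)` times the power series expansion at `0` of `F_k^{k+1}(x)`. -/
theorem stmt13 (k : ℕ) (hk : 1 ≤ k) :
    (PowerSeries.mk fun m => if k - 1 ≤ m then rVal (2 * k + 1) (m - (k - 1)) else 0)
      = PowerSeries.C
          (∏ j ∈ Finset.range k, (j.factorial : ℚ) / ((k + 1 + j).factorial : ℚ))
        * Fab k (k + 1) := by
  ext m
  rw [coeff_C_mul, coeff_mk, coeff_Fab hk]
  split_ifs with h
  · obtain ⟨n, rfl⟩ : ∃ n, m = n + (k - 1) := ⟨m - (k - 1), by omega⟩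
    rw [Nat.add_sub_cancel, rVal_two_mul_add_one]
    congr 2 with i
    congr 2
    omega
  · have first_factor_eq_zero : ((m + 1 + 0).descFactorial k : ℚ) = 0 := by
      rw [Nat.descFactorial_of_lt (by omega), Nat.cast_zero]
    rw [prod_eq_zero (mem_range.mpr k.succ_pos) first_factor_eq_zero, mul_zero]
end

section
/- For every natural number k ≥ 0, the formal power series B_{2k+1}(x) := (1+x²)^{k²+k+1} · Σ_{n≥0} (-1)^{C(n,2)}·r_{2k+1}(n)·x^n is a polynomial of degree 2k²+1, and this polynomial satisfies x^{2k²+1}·B_{2k+1}(1/x) = (-1)^k·B_{2k+1}(x). -/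
/-!
Write `s(n) = (-1)^C(n,2) = (-1)^⌊n/2⌋`, `P = r_{2k+1}` and `m = k² + k + 1`. The `n`-th
coefficient of `(1 + x²)^m · Σ s(n) P(n) xⁿ` is `s(n) · Σ_{2i ≤ n} (-1)^i C(m,i) P(n - 2i)`.
Since `deg P = k² + k < m`, the full sum over `0 ≤ i ≤ m` is an `m`-th finite difference of `P`
and vanishes, so the truncated sum is minus its complementary part. `P` vanishes at
`-1, …, -2k`, which kills the complementary part when `n > 2k² + 1`; and
`P(-(2k+1) - x) = P(x)`, so the substitution `i ↦ m - i` in the complementary part gives the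
symmetry `n ↦ 2k² + 1 - n` of the coefficients. The top coefficient is then `±P(0) = ±1`.
-/

open Polynomial Finset

lemma neg_one_pow_eq_mul_neg_one_pow {R : Type*} [Monoid R] [HasDistribNeg R] {a b c : ℕ}
    (h : a + b = c) : (-1 : R) ^ a = (-1) ^ c * (-1) ^ b := by
  rw [← h, pow_add, mul_assoc, ← pow_add, ← two_mul, pow_mul, neg_one_sq, one_pow, mul_one]

lemma neg_one_pow_choose_two {R : Type*} [Monoid R] [HasDistribNeg R] (n : ℕ) :
    (-1 : R) ^ n.choose 2 = (-1) ^ (n / 2) := by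
  induction n using Nat.twoStepInduction with
  | zero => rfl
  | one => rfl
  | more n ih _ =>
    have h : (n + 2).choose 2 = n.choose 2 + 2 * n + 1 := by
      simp only [Nat.choose_succ_succ, Nat.choose_one_right, Nat.choose_zero_right]; ring
    rw [h, show (n + 2) / 2 = n / 2 + 1 by omega, pow_succ, pow_add, pow_mul, neg_one_sq,
      one_pow, mul_one, ih, pow_succ]

namespace PowerSeries

variable {R : Type*} [CommSemiring R] {f : R⟦X⟧}

lemma coe_trunc_of_coeff_eq_zero {N : ℕ} (h : ∀ n, N ≤ n → coeff n f = 0) :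
    (trunc N f : R⟦X⟧) = f := by
  ext n
  rw [Polynomial.coeff_coe, coeff_trunc]
  split_ifs with hn
  · rfl
  · exact (h n (not_lt.mp hn)).symm

lemma degree_trunc_succ {D : ℕ} (hD : coeff D f ≠ 0) : (trunc (D + 1) f).degree = D :=
  degree_eq_of_le_of_coeff_ne_zero
    (degree_le_of_natDegree_le (Nat.lt_succ_iff.mp (natDegree_trunc_lt f D)))
    (by rwa [coeff_trunc, if_pos D.lt_succ_self])

lemma reflect_trunc_succ {D : ℕ} {c : R} (h : ∀ n ≤ D, coeff (D - n) f = c * coeff n f) :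
    (trunc (D + 1) f).reflect D = Polynomial.C c * trunc (D + 1) f := by
  ext n
  rw [coeff_reflect, Polynomial.coeff_C_mul, coeff_trunc, coeff_trunc]
  by_cases hn : n ≤ D
  · rw [revAt_le hn, if_pos (by omega), if_pos (by omega), h n hn]
  · rw [revAt_eq_self_of_lt (by omega), if_neg (by omega), mul_zero]

lemma coeff_one_add_X_sq_pow_mul_mk (m n : ℕ) (a : ℕ → R) :
    coeff n ((1 + X ^ 2) ^ m * mk a)
      = ∑ i ∈ range (m + 1) with 2 * i ≤ n, (m.choose i : R) * a (n - 2 * i) := by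
  rw [add_comm, add_pow, sum_mul, map_sum, sum_filter]
  refine sum_congr rfl fun i _ => ?_
  rw [one_pow, mul_one, ← pow_mul, ← map_natCast C, mul_comm (X ^ _) (C _), mul_assoc, coeff_C_mul,
    coeff_X_pow_mul', coeff_mk]
  split_ifs <;> simp

end PowerSeries

lemma Polynomial.sum_range_neg_one_pow_mul_choose_mul_eval_sub {R : Type*} [CommRing R]
    {P : R[X]} {m : ℕ} (hP : P.natDegree < m) (x h : R) :
    ∑ i ∈ range (m + 1), (-1) ^ i * (m.choose i : R) * P.eval (x - h * i) = 0 := by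
  set Q := P.comp (C x - C h * X)
  have hQ : Q.natDegree < m := by
    refine natDegree_comp_le.trans_lt ?_
    have : (C x - C h * X).natDegree ≤ 1 := by compute_degree
    exact (Nat.mul_le_mul_left _ this).trans_lt (by rwa [mul_one])
  have hsum := congrFun (fwdDiff_iter_eq_zero_of_degree_lt hQ) 0
  rw [fwdDiff_iter_eq_sum_shift, Pi.zero_apply] at hsum
  have hterm : ∀ i ∈ range (m + 1), ((-1 : ℤ) ^ (m - i) * m.choose i) • Q.eval (0 + i • 1)
      = (-1) ^ m * ((-1) ^ i * (m.choose i : R) * P.eval (x - h * i)) := fun i hi => by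
    rw [neg_one_pow_eq_mul_neg_one_pow (Nat.sub_add_cancel (mem_range_succ_iff.mp hi))]
    simp only [Q, zsmul_eq_mul, eval_comp, eval_sub, eval_mul, eval_C, eval_X, nsmul_eq_mul]
    push_cast
    rw [zero_add, mul_one]
    ring
  rw [sum_congr rfl hterm, ← mul_sum] at hsum
  exact ((isUnit_neg_one (α := R)).pow m).mul_right_eq_zero.mp hsum

section PartialAltSum

variable {R : Type*} [CommRing R] (P : R[X]) (m : ℕ)

noncomputable def partialAltSum (x : R) (c : ℕ) : R :=
  ∑ i ∈ range (m + 1) with 2 * i ≤ c, (-1) ^ i * (m.choose i : R) * P.eval (x - 2 * i)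

lemma coeff_one_add_X_sq_pow_mul_mk_eval (n : ℕ) :
    PowerSeries.coeff n ((1 + PowerSeries.X ^ 2) ^ m *
        PowerSeries.mk fun j => (-1) ^ (j / 2) * P.eval (j : R))
      = (-1) ^ (n / 2) * partialAltSum P m n n := by
  rw [PowerSeries.coeff_one_add_X_sq_pow_mul_mk, partialAltSum, mul_sum]
  refine sum_congr rfl fun i hi => ?_
  have hin : 2 * i ≤ n := (mem_filter.mp hi).2
  rw [neg_one_pow_eq_mul_neg_one_pow (show (n - 2 * i) / 2 + i = n / 2 by omega),
    Nat.cast_sub hin]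
  push_cast
  ring

lemma partialAltSum_zero_zero : partialAltSum P m 0 0 = P.eval 0 := by
  rw [partialAltSum, sum_eq_single_of_mem 0 (by simp) fun i hi hi0 => by
    rw [mem_filter] at hi; omega]
  simp

variable {P m} {r D : ℕ}

lemma partialAltSum_eq_zero_of_le (hP : P.natDegree < m) (x : R) {c : ℕ} (hc : 2 * m ≤ c) :
    partialAltSum P m x c = 0 := by
  rw [partialAltSum, filter_true_of_mem fun i hi => by rw [mem_range] at hi; omega]
  exact sum_range_neg_one_pow_mul_choose_mul_eval_sub hP x 2

lemma partialAltSum_eq_of_eval_neg_eq_zero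
    (hroots : ∀ t : ℕ, 1 ≤ t → t ≤ r → P.eval (-(t : R)) = 0) {n c : ℕ} (hnc : n ≤ c)
    (hcr : c ≤ n + r) :
    partialAltSum P m n c = partialAltSum P m n n := by
  refine (sum_subset (fun i hi => ?_) fun i hi hin => ?_).symm
  · rw [mem_filter] at hi ⊢
    exact ⟨hi.1, by omega⟩
  · obtain ⟨hi_range, hic⟩ := mem_filter.mp hi
    have hni : n < 2 * i := by simpa [hi_range] using hin
    have hroot := hroots (2 * i - n) (by omega) (by omega)
    rw [Nat.cast_sub (by omega), neg_sub] at hroot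
    push_cast at hroot
    rw [hroot, mul_zero]

lemma partialAltSum_reflect (hm : Odd m) (hP : P.natDegree < m) {s : R}
    (hs : ∀ y, P.eval (s - y) = P.eval y) (x : R) {c : ℕ} (hc : c < 2 * m) :
    partialAltSum P m x c = partialAltSum P m (s - x + 2 * m) (2 * m - 1 - c) := by
  have hsplit := sum_filter_add_sum_filter_not (range (m + 1)) (fun i => 2 * i ≤ c)
    fun i => (-1) ^ i * (m.choose i : R) * P.eval (x - 2 * i)
  rw [sum_range_neg_one_pow_mul_choose_mul_eval_sub hP x 2] at hsplit
  have hcompl : ∑ i ∈ range (m + 1) with ¬ 2 * i ≤ c,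
      (-1) ^ i * (m.choose i : R) * P.eval (x - 2 * i)
      = -partialAltSum P m (s - x + 2 * m) (2 * m - 1 - c) := by
    have hterm : ∀ i ∈ range (m + 1), (-1) ^ i * (m.choose i : R) * P.eval (x - 2 * i)
        = -((-1) ^ (m - i) * (m.choose (m - i) : R) *
            P.eval (s - x + 2 * m - 2 * (m - i : ℕ))) := by
      intro i hi
      have him : i ≤ m := mem_range_succ_iff.mp hi
      rw [Nat.choose_symm him, Nat.cast_sub him,
        show s - x + 2 * m - 2 * (m - i : R) = s - (x - 2 * i) by ring, hs,
        neg_one_pow_eq_mul_neg_one_pow (Nat.sub_add_cancel him), hm.neg_one_pow]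
      ring
    rw [partialAltSum, ← sum_neg_distrib]
    refine sum_nbij' (fun i => m - i) (fun j => m - j) ?_ ?_ ?_ ?_
      fun i hi => hterm i (mem_filter.mp hi).1
    all_goals intro i hi; simp only [mem_filter, mem_range] at hi ⊢; omega
  rw [partialAltSum]
  linear_combination hsplit - hcompl

lemma partialAltSum_self_eq_zero (hP : P.natDegree < m)
    (hroots : ∀ t : ℕ, 1 ≤ t → t ≤ r → P.eval (-(t : R)) = 0) (hD : D + r + 1 = 2 * m) {n : ℕ}
    (hn : D < n) : partialAltSum P m n n = 0 := by
  rw [← partialAltSum_eq_of_eval_neg_eq_zero hroots (Nat.le_add_right n r) le_rfl]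
  exact partialAltSum_eq_zero_of_le hP _ (by omega)

lemma partialAltSum_self_sub (hm : Odd m) (hP : P.natDegree < m)
    (hroots : ∀ t : ℕ, 1 ≤ t → t ≤ r → P.eval (-(t : R)) = 0)
    (hs : ∀ y : R, P.eval (-((r : R) + 1) - y) = P.eval y) (hD : D + r + 1 = 2 * m) {n : ℕ}
    (hn : n ≤ D) :
    partialAltSum P m (D - n : ℕ) (D - n) = partialAltSum P m n n := by
  have hD' : (D : R) + r + 1 = 2 * m := by simpa using congrArg (Nat.cast : ℕ → R) hD
  rw [partialAltSum_reflect hm hP hs (n : R) (by omega),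
    show -((r : R) + 1) - n + 2 * m = (D - n : ℕ) by rw [Nat.cast_sub hn]; linear_combination -hD',
    show 2 * m - 1 - n = D - n + r by omega]
  exact (partialAltSum_eq_of_eval_neg_eq_zero hroots (Nat.le_add_right _ r) le_rfl).symm

theorem exists_polynomial_eq_one_add_X_sq_pow_mul (hm : Odd m) (hr : Even r)
    (hP : P.natDegree < m) (hroots : ∀ t : ℕ, 1 ≤ t → t ≤ r → P.eval (-(t : R)) = 0)
    (hs : ∀ y : R, P.eval (-((r : R) + 1) - y) = P.eval y) (h0 : P.eval 0 ≠ 0)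
    (hD : D + r + 1 = 2 * m) :
    ∃ B : R[X], (B : PowerSeries R) = (1 + PowerSeries.X ^ 2) ^ m *
        PowerSeries.mk (fun n => (-1) ^ (n / 2) * P.eval (n : R))
      ∧ B.degree = D ∧ B.reflect D = C ((-1) ^ (D / 2)) * B := by
  have hcoeff := coeff_one_add_X_sq_pow_mul_mk_eval P m
  refine ⟨PowerSeries.trunc (D + 1) _, PowerSeries.coe_trunc_of_coeff_eq_zero fun n hn => ?_,
    PowerSeries.degree_trunc_succ ?_, PowerSeries.reflect_trunc_succ fun n hn => ?_⟩
  · rw [hcoeff, partialAltSum_self_eq_zero hP hroots hD (by omega), mul_zero]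
  · have htop := partialAltSum_self_sub hm hP hroots hs hD (le_refl D)
    rw [Nat.sub_self, Nat.cast_zero, partialAltSum_zero_zero] at htop
    rw [hcoeff, ← htop]
    exact mt ((isUnit_neg_one.pow _).mul_right_eq_zero).mp h0
  · obtain ⟨q, rfl⟩ := hr
    rw [hcoeff, hcoeff, partialAltSum_self_sub hm hP hroots hs hD hn,
      neg_one_pow_eq_mul_neg_one_pow (show (D - n) / 2 + n / 2 = D / 2 by omega), mul_assoc]

end PartialAltSum

/-- The `j = 0` factor is `1`; indexing by `range (K + 1)` makes `j ↦ K - j` a bijection of the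
index set. -/
noncomputable def rPoly (K : ℕ) : ℚ[X] :=
  ∏ j ∈ range (K + 1), (C (j : ℚ)⁻¹ * (X + C (j : ℚ))) ^ min j (K - j)

lemma eval_rPoly (K : ℕ) (x : ℚ) :
    (rPoly K).eval x = ∏ j ∈ range (K + 1), ((x + j) / j) ^ min j (K - j) := by
  simp [rPoly, eval_prod, div_eq_inv_mul]

lemma eval_rPoly_natCast (K n : ℕ) : (rPoly K).eval (n : ℚ) = rVal K n := by
  rw [eval_rPoly, rVal, prod_range_succ', Nat.zero_min, pow_zero, mul_one,
    ← Ico_add_one_right_eq_Icc, prod_Ico_eq_prod_range, Nat.add_sub_cancel]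
  refine prod_congr rfl fun j _ => ?_
  rw [add_comm 1 j]

lemma natDegree_rPoly_le (K : ℕ) :
    (rPoly K).natDegree ≤ ∑ j ∈ range (K + 1), min j (K - j) := by
  refine (natDegree_prod_le _ _).trans (sum_le_sum fun j _ => natDegree_pow_le.trans ?_)
  have : (C (j : ℚ)⁻¹ * (X + C (j : ℚ))).natDegree ≤ 1 := by compute_degree
  exact (Nat.mul_le_mul_left _ this).trans_eq (mul_one _)

lemma eval_rPoly_neg_natCast {K t : ℕ} (ht : 1 ≤ t) (htK : t < K) :
    (rPoly K).eval (-t : ℚ) = 0 := by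
  rw [eval_rPoly]
  refine prod_eq_zero (mem_range.mpr (by omega : t < K + 1)) ?_
  rw [neg_add_cancel, zero_div, zero_pow (by omega)]

lemma eval_rPoly_zero (K : ℕ) : (rPoly K).eval 0 = 1 := by
  rw [eval_rPoly]
  refine prod_eq_one fun j _ => ?_
  rcases eq_or_ne j 0 with rfl | hj
  · simp
  · rw [zero_add, div_self (by exact_mod_cast hj), one_pow]

lemma eval_rPoly_neg_sub (K : ℕ) (x : ℚ) :
    (rPoly K).eval (-K - x) = (-1) ^ (∑ j ∈ range (K + 1), min j (K - j)) * (rPoly K).eval x := by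
  have hterm : ∀ j ∈ range (K + 1), ((-K - x + j) / j) ^ min j (K - j)
      = (-1) ^ min j (K - j) * ((x + (K - j : ℕ)) ^ min j (K - j) / (j : ℚ) ^ min j (K - j)) := by
    intro j hj
    rw [Nat.cast_sub (mem_range_succ_iff.mp hj), div_pow, ← mul_div_assoc, ← mul_pow]
    ring_nf
  have hreflect : ∏ j ∈ range (K + 1), (x + (K - j : ℕ)) ^ min j (K - j)
      = ∏ j ∈ range (K + 1), (x + j) ^ min j (K - j) := by
    rw [← prod_range_reflect (fun j => (x + j) ^ min j (K - j))]
    refine prod_congr rfl fun j hj => ?_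
    have hjK := mem_range_succ_iff.mp hj
    rw [Nat.add_sub_cancel, min_comm, Nat.sub_sub_self hjK]
  rw [eval_rPoly, eval_rPoly, prod_congr rfl hterm, prod_mul_distrib, prod_pow_eq_pow_sum,
    prod_div_distrib, hreflect, ← prod_div_distrib]
  simp only [div_pow]

lemma sum_range_min_sub_two_mul_add_one (k : ℕ) :
    ∑ j ∈ range (2 * k + 1 + 1), min j (2 * k + 1 - j) = k ^ 2 + k := by
  induction k with
  | zero => rfl
  | succ k ih =>
    rw [show 2 * (k + 1) + 1 + 1 = 2 * k + 1 + 1 + 1 + 1 by ring, sum_range_succ', sum_range_succ]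
    have hshift : ∀ j ∈ range (2 * k + 1 + 1),
        min (j + 1) (2 * (k + 1) + 1 - (j + 1)) = min j (2 * k + 1 - j) + 1 := fun j hj => by
      have := mem_range.mp hj
      omega
    rw [sum_congr rfl hshift, sum_add_distrib, ih]
    simp only [sum_const, card_range, smul_eq_mul, mul_one, Nat.zero_min, add_zero,
      show 2 * (k + 1) + 1 - (2 * k + 1 + 1 + 1) = 0 by omega, Nat.min_zero]
    ring

/-- For every `k ≥ 0`, the formal power series
`B_{2k+1}(x) = (1+x²)^(k²+k+1) · Σ_{n≥0} (-1)^(C(n,2))·r_{2k+1}(n)·x^n`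
is a polynomial of degree `2k²+1`, and this polynomial satisfies
`x^(2k²+1)·B_{2k+1}(1/x) = (-1)^k·B_{2k+1}(x)` (the left-hand side being the
reversal of the coefficients of `B_{2k+1}`). -/
theorem stmt14 (k : ℕ) :
    ∃ B : Polynomial ℚ,
      (B : PowerSeries ℚ)
          = (1 + PowerSeries.X ^ 2) ^ (k ^ 2 + k + 1) *
              PowerSeries.mk (fun n => (-1 : ℚ) ^ n.choose 2 * rVal (2 * k + 1) n)
        ∧ B.degree = (2 * k ^ 2 + 1 : ℕ)
        ∧ Polynomial.reflect (2 * k ^ 2 + 1) B = Polynomial.C ((-1 : ℚ) ^ k) * B := by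
  have hexp := sum_range_min_sub_two_mul_add_one k
  have heven : Even (k ^ 2 + k) := by simpa [sq, ← mul_add_one] using Nat.even_mul_succ_self k
  have hdeg : (rPoly (2 * k + 1)).natDegree < k ^ 2 + k + 1 :=
    (natDegree_rPoly_le _).trans_lt (by omega)
  have hroots (t : ℕ) (ht : 1 ≤ t) (htk : t ≤ 2 * k) : (rPoly (2 * k + 1)).eval (-(t : ℚ)) = 0 :=
    eval_rPoly_neg_natCast ht (by omega)
  have hsymm (y : ℚ) : (rPoly (2 * k + 1)).eval (-(((2 * k : ℕ) : ℚ) + 1) - y)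
      = (rPoly (2 * k + 1)).eval y := by
    have h := eval_rPoly_neg_sub (2 * k + 1) y
    rw [hexp, heven.neg_one_pow, one_mul] at h
    rw [← h]
    congr 1
    push_cast
    ring
  obtain ⟨B, hB, hBdeg, hBrefl⟩ := exists_polynomial_eq_one_add_X_sq_pow_mul heven.add_one
    (even_two_mul k) hdeg hroots hsymm (by rw [eval_rPoly_zero]; exact one_ne_zero)
    (show 2 * k ^ 2 + 1 + 2 * k + 1 = 2 * (k ^ 2 + k + 1) by ring)
  refine ⟨B, ?_, hBdeg, ?_⟩
  · simp only [hB, neg_one_pow_choose_two, eval_rPoly_natCast]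
  · rw [hBrefl, show (2 * k ^ 2 + 1) / 2 = k ^ 2 by omega, sq, pow_mul]
    rcases neg_one_pow_eq_or ℚ k with h | h <;> simp [h]
end
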